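/- arXiv:1804.01821 — 2 statements merged into one kernel-verified Lean document; each statement's English description precedes it below -/
import Mathlib

section
/- Suppose 𝒮 = {S₁, ..., S_k} is a strictly circular split system on X with underlying circular partition X = X₁ ∪̇ ... ∪̇ X_{2k}, k ≥ 2. Then every pair of distinct splits in 𝒮 is incompatible. -/
variable {X : Type*}

/-- Two splits are compatible if some part of one and some part of the other cover `X`. -/
def Compatible (S T : Set (Set X)) : Prop :=
  ∃ A ∈ S, ∃ B ∈ T, A ∪ B = Set.univ

/-- The `i`-th split of the strictly circular split system on the circular partition
`X = X₀ ∪̇ ... ∪̇ X_{2k-1}`: its parts are the unions of `k` consecutive blocks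
starting at `X_i` and at `X_{i+k}` respectively (indices mod `2k`). -/
def circSplit (k : ℕ) (Y : ℕ → Set X) (i : ℕ) : Set (Set X) :=
  {⋃ m ∈ Finset.range k, Y ((i + m) % (2 * k)),
   ⋃ m ∈ Finset.range k, Y ((i + k + m) % (2 * k))}

/-- If `x % (2k) = k` then (for `x < 4k`) `x = k` or `x = 3k`. -/
lemma mod_ne_k {k x : ℕ} (hx : x < 4 * k) (h1 : x ≠ k) (h2 : x ≠ 3 * k) :
    x % (2 * k) ≠ k := by
  intro h
  rcases Nat.lt_or_ge x (2 * k) with hlt | hge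
  · rw [Nat.mod_eq_of_lt hlt] at h; omega
  · rw [Nat.mod_eq_sub_mod hge, Nat.mod_eq_of_lt (by omega)] at h; omega

/-- Key combinatorial lemma: if the arcs of length `k` starting at `a` and `b` in `ℤ/2k`
are not complementary (`(a + 2k - b) % 2k ≠ k`), some residue `t` is missed by both. -/
lemma key (k : ℕ) (hk : 2 ≤ k) (a b : ℕ) (hb : b ≤ a + 2 * k)
    (hd : (a + 2 * k - b) % (2 * k) ≠ k) :
    ∃ t < 2 * k, (∀ m < k, (a + m) % (2 * k) ≠ t) ∧ (∀ m < k, (b + m) % (2 * k) ≠ t) := by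
  set n := 2 * k with hn
  have hn0 : 0 < n := by omega
  set d := (a + n - b) % n with hdd
  have hdn : d < n := Nat.mod_lt _ hn0
  have hba : b + d ≡ a [MOD n] := by
    calc b + d ≡ b + (a + n - b) [MOD n] := Nat.ModEq.add_left b (Nat.mod_modEq _ n)
    _ = a + n := by omega
    _ ≡ a [MOD n] := Nat.add_mod_right a n
  rcases Nat.lt_or_ge d k with hdk | hdk
  · -- witness: a + k
    refine ⟨(a + k) % n, Nat.mod_lt _ hn0, ?_, ?_⟩
    · intro m hm heq
      have h3 : m ≡ k [MOD n] := Nat.ModEq.add_left_cancel' a heq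
      have h4 : m % n = k % n := h3
      rw [Nat.mod_eq_of_lt (by omega), Nat.mod_eq_of_lt (by omega)] at h4
      omega
    · intro m hm heq
      have h2 : b + m ≡ b + (d + k) [MOD n] := by
        calc b + m ≡ a + k [MOD n] := heq
        _ ≡ (b + d) + k [MOD n] := (hba.symm.add_right k)
        _ = b + (d + k) := by ring
      have h3 : m ≡ d + k [MOD n] := Nat.ModEq.add_left_cancel' b h2
      have h4 : m % n = (d + k) % n := h3
      rw [Nat.mod_eq_of_lt (by omega), Nat.mod_eq_of_lt (by omega)] at h4
      omega
  · -- d > k; witness: b + k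
    refine ⟨(b + k) % n, Nat.mod_lt _ hn0, ?_, ?_⟩
    · intro m hm heq
      have h2 : b + (d + m) ≡ b + k [MOD n] := by
        calc b + (d + m) = (b + d) + m := by ring
        _ ≡ a + m [MOD n] := hba.add_right m
        _ ≡ b + k [MOD n] := heq
      have h3 : d + m ≡ k [MOD n] := Nat.ModEq.add_left_cancel' b h2
      have h4 : (d + m) % n = k % n := h3
      rw [Nat.mod_eq_of_lt (show k < n by omega)] at h4
      rcases Nat.lt_or_ge (d + m) n with h | h
      · rw [Nat.mod_eq_of_lt h] at h4; omega
      · rw [Nat.mod_eq_sub_mod h, Nat.mod_eq_of_lt (by omega)] at h4; omega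
    · intro m hm heq
      have h3 : m ≡ k [MOD n] := Nat.ModEq.add_left_cancel' b heq
      have h4 : m % n = k % n := h3
      rw [Nat.mod_eq_of_lt (by omega), Nat.mod_eq_of_lt (by omega)] at h4
      omega

/-- The two arcs starting at `a` and `b` cannot cover `X` when not complementary. -/
lemma covers_false (k : ℕ) (hk : 2 ≤ k) (Y : ℕ → Set X)
    (hne : ∀ i < 2 * k, (Y i).Nonempty)
    (hdisj : ∀ i < 2 * k, ∀ j < 2 * k, i ≠ j → Y i ∩ Y j = ∅)
    (a b : ℕ) (hb : b ≤ a + 2 * k) (hd : (a + 2 * k - b) % (2 * k) ≠ k)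
    (hU : (⋃ m ∈ Finset.range k, Y ((a + m) % (2 * k))) ∪
          (⋃ m ∈ Finset.range k, Y ((b + m) % (2 * k))) = Set.univ) : False := by
  obtain ⟨t, ht, h1, h2⟩ := key k hk a b hb hd
  obtain ⟨x, hx⟩ := hne t ht
  have hxu : x ∈ (⋃ m ∈ Finset.range k, Y ((a + m) % (2 * k))) ∪
          (⋃ m ∈ Finset.range k, Y ((b + m) % (2 * k))) := by
    rw [hU]; trivial
  have contra : ∀ s, s < 2 * k → s ≠ t → x ∈ Y s → False := by
    intro s hs hst hxs
    have hemp := hdisj t ht s hs (Ne.symm hst)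
    have : x ∈ Y t ∩ Y s := ⟨hx, hxs⟩
    rw [hemp] at this
    exact this
  rcases hxu with hxa | hxb
  · simp only [Set.mem_iUnion, Finset.mem_range] at hxa
    obtain ⟨m, hm, hxm⟩ := hxa
    exact contra _ (Nat.mod_lt _ (by omega)) (h1 m hm) hxm
  · simp only [Set.mem_iUnion, Finset.mem_range] at hxb
    obtain ⟨m, hm, hxm⟩ := hxb
    exact contra _ (Nat.mod_lt _ (by omega)) (h2 m hm) hxm

/-- in a strictly circular split system `{S₁, ..., S_k}` (`k ≥ 2`) on the
circular partition `X = X₀ ∪̇ ... ∪̇ X_{2k-1}`, every pair of distinct splits is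
incompatible. -/
theorem stmt12 [Fintype X] (k : ℕ) (hk : 2 ≤ k) (Y : ℕ → Set X)
    (hne : ∀ i < 2 * k, (Y i).Nonempty)
    (hdisj : ∀ i < 2 * k, ∀ j < 2 * k, i ≠ j → Y i ∩ Y j = ∅)
    (hcov : (⋃ i ∈ Finset.range (2 * k), Y i) = Set.univ) :
    ∀ i < k, ∀ j < k, i ≠ j → ¬ Compatible (circSplit k Y i) (circSplit k Y j) := by
  intro i hi j hj hij ⟨A, hA, B, hB, hU⟩
  simp only [circSplit, Set.mem_insert_iff, Set.mem_singleton_iff] at hA hB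
  rcases hA with hA | hA <;> rcases hB with hB | hB <;> subst hA <;> subst hB
  · exact covers_false k hk Y hne hdisj i j (by omega)
      (mod_ne_k (by omega) (by omega) (by omega)) hU
  · exact covers_false k hk Y hne hdisj i (j + k) (by omega)
      (mod_ne_k (by omega) (by omega) (by omega)) hU
  · exact covers_false k hk Y hne hdisj (i + k) j (by omega)
      (mod_ne_k (by omega) (by omega) (by omega)) hU
  · exact covers_false k hk Y hne hdisj (i + k) (j + k) (by omega)
      (mod_ne_k (by omega) (by omega) (by omega)) hU
end

section
/- Let (𝒮, α) be a weighted split system on X, and let x ∈ X. Then κ(φ_x) = h_x, where h_x(y) = d_{𝒮,α}(x,y) for all y ∈ X. That is, the map κ sends the canonical embedding of X into the Buneman complex to the Kuratowski embedding of X into ℝ^X with respect to d_{𝒮,α}. -/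
variable {X : Type*}

open Classical in
/-- The canonical image `φ_x` of `x ∈ X` in the Buneman complex:
`φ_x(A) = α(A|Ā)/2` if `x ∉ A`, and `0` otherwise. -/
noncomputable def phiX (α : Set X → ℝ) (x : X) (A : Set X) : ℝ :=
  if x ∈ A then 0 else α A / 2

open Classical in
/-- `δ_S(x,y)` for the split `S = A|Ā`: `1` if `S` separates `x` and `y`, else `0`. -/
noncomputable def delta (A : Set X) (x y : X) : ℝ :=
  if x ∈ A ↔ y ∈ A then 0 else 1

/-- The map `κ : ℝ^{𝒰(𝒮)} → ℝ^X`, `κ(φ)(y) = d₁(φ, φ_y)`, where `U` is the (finite)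
set of parts of the split system. -/
noncomputable def kappa (U : Finset (Set X)) (α : Set X → ℝ)
    (φ : Set X → ℝ) : X → ℝ :=
  fun y => ∑ A ∈ U, |φ A - phiX α y A|

open Classical in
/-- `κ(φ_x) = h_x`, i.e. for all `y ∈ X`,
`d₁(φ_x, φ_y) = Σ_{S ∈ 𝒮} α(S) δ_S(x,y) = d_{𝒮,α}(x,y)`
(with `R` a set of representative parts, one per split, so `𝒰(𝒮) = R ∪ Rᶜ`). -/
theorem stmt19 [Fintype X] (R : Finset (Set X)) (α : Set X → ℝ)
    (hR : ∀ A ∈ R, A.Nonempty ∧ Aᶜ.Nonempty) (hRc : ∀ A ∈ R, Aᶜ ∉ R)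
    (hα : ∀ A ∈ R, 0 < α A ∧ α Aᶜ = α A) (x : X) :
    ∀ y : X, kappa (R ∪ R.image compl) α (phiX α x) y =
      ∑ S ∈ R, α S * delta S x y := by
  intro y
  unfold kappa
  have hdisj : Disjoint R (R.image compl) := by
    rw [Finset.disjoint_left]
    intro A hA hA'
    obtain ⟨B, hB, rfl⟩ := Finset.mem_image.mp hA'
    exact hRc B hB (by simpa using hA)
  rw [Finset.sum_union hdisj,
    Finset.sum_image (fun a _ b _ h => compl_injective h),
    ← Finset.sum_add_distrib]
  apply Finset.sum_congr rfl
  intro A hA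
  obtain ⟨hpos, hc⟩ := hα A hA
  unfold phiX delta
  by_cases hx : x ∈ A <;> by_cases hy : y ∈ A <;>
    simp [hx, hy, hc, abs_of_nonneg, abs_of_nonpos, hpos.le, Set.mem_compl_iff] <;>
    ring_nf <;>
    simp [abs_of_nonneg, hpos.le]
end
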